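/- Let n ≥ 2 be an integer, 0 < α < n, and 1 < p < q < ∞ with α/n = 1/p − 1/q. There exists a constant C = C(n, p, q, C₀) such that for every nonnegative f ∈ L^p(ℝ^{n+1}) with ‖f‖_{L^p} > 0, every integer ℓ with 0 ≤ ℓ ≤ η, every j ∈ ℤ, and every (x,t) ∈ ℝ^{n+1} at which 0 < (M_η f)(x,t) < ∞ and θ_ℓ(x,t) > 0, one has (Δ_{ℓj} I_α f)(x,t) ≤ C 2^{−|j − ρ_ℓ(x,t)| (n+1) min{α/n, 1/q}} θ_ℓ(x,t)^{1/p − 1/q} (M_η f)(x,t)^{p/q} ‖f‖_{L^p(ℝ^{n+1})}^{1 − p/q}. -/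

import Mathlib

open MeasureTheory ENNReal NNReal

noncomputable section

/-- `ℝ^{n+1}` as `ℝ^n × ℝ`. -/
abbrev Pt (n : ℕ) := EuclideanSpace ℝ (Fin n) × ℝ

/-- The open light cone `Λ = {(y,s) : |s| > |y|}`. -/
def lightCone (n : ℕ) : Set (Pt n) := {p | ‖p.1‖ < |p.2|}

/-- The integrand `f(x−y, t−s) (|s|+|y|)^{α−n} (|s|−|y|)^{α/n−1}`. -/
def ker (n : ℕ) (α : ℝ) (f : Pt n → ℝ) (z p : Pt n) : ℝ≥0∞ :=
  ENNReal.ofReal (f (z.1 - p.1, z.2 - p.2)) *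
    ENNReal.ofReal ((|p.2| + ‖p.1‖) ^ (α - n) * (|p.2| - ‖p.1‖) ^ (α / n - 1))

/-- The light-cone fractional integral `I_α f`. -/
def Iop (n : ℕ) (α : ℝ) (f : Pt n → ℝ) (z : Pt n) : ℝ≥0∞ :=
  ∫⁻ p in lightCone n, ker n α f z p

/-- The shifted cone shell `Λ_{ℓj}(x,t)`. -/
def shellAt (n : ℕ) (ℓ j : ℤ) (c : Pt n) : Set (Pt n) :=
  {p | (2:ℝ) ^ j ≤ |p.2 - c.2| + ‖p.1 - c.1‖ ∧ |p.2 - c.2| + ‖p.1 - c.1‖ < (2:ℝ) ^ (j + 1) ∧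
       (2:ℝ) ^ (j - ℓ) ≤ |p.2 - c.2| - ‖p.1 - c.1‖ ∧
       |p.2 - c.2| - ‖p.1 - c.1‖ < (2:ℝ) ^ (j - ℓ + 1)}

/-- The dyadic enlargement `Λ*_{ℓj}(x,t)`. -/
def shellStarAt (n : ℕ) (ℓ j : ℤ) (c : Pt n) : Set (Pt n) :=
  {p | (2:ℝ) ^ (j - 3) ≤ |p.2 - c.2| + ‖p.1 - c.1‖ ∧
       |p.2 - c.2| + ‖p.1 - c.1‖ < (2:ℝ) ^ (j + 3) ∧
       (2:ℝ) ^ (j - ℓ - 3) ≤ |p.2 - c.2| - ‖p.1 - c.1‖ ∧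
       |p.2 - c.2| - ‖p.1 - c.1‖ < (2:ℝ) ^ (j - ℓ + 3)}

/-- The cone shell `Λ_{ℓj}` (centered at the origin). -/
def shell (n : ℕ) (ℓ j : ℤ) : Set (Pt n) := shellAt n ℓ j 0

/-- The discrete dyadic cone `Λ_ℓ = ⋃_j Λ_{ℓj}`. -/
def Lam (n : ℕ) (ℓ : ℤ) : Set (Pt n) := ⋃ j : ℤ, shell n ℓ j

/-- The partial operator `Δ_{ℓj} I_α f`. -/
def Dlj (n : ℕ) (α : ℝ) (ℓ j : ℤ) (f : Pt n → ℝ) (z : Pt n) : ℝ≥0∞ :=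
  ∫⁻ p in shell n ℓ j, ker n α f z p

/-- The partial operator `Δ_ℓ I_α f`. -/
def Dl (n : ℕ) (α : ℝ) (ℓ : ℤ) (f : Pt n → ℝ) (z : Pt n) : ℝ≥0∞ :=
  ∫⁻ p in Lam n ℓ, ker n α f z p

/-- `θ_ℓ(x,t) = ‖f‖_p^{−p} ∬_{Λ_ℓ} f(x−y,t−s)^p dy ds`. -/
def theta (n : ℕ) (p : ℝ) (f : Pt n → ℝ) (ℓ : ℤ) (z : Pt n) : ℝ≥0∞ :=
  (∫⁻ w in Lam n ℓ, ENNReal.ofReal (f (z.1 - w.1, z.2 - w.2)) ^ p) /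
    eLpNorm f (ENNReal.ofReal p) volume ^ p

/-- The cone of directions `Γ^ν_η` with central direction `e`. -/
def coneDir (n η : ℕ) (e : EuclideanSpace ℝ (Fin n)) : Set (EuclideanSpace ℝ (Fin n)) :=
  {y | y ≠ 0 ∧ ‖(‖y‖⁻¹ • y) - e‖ ≤ 4 * (2:ℝ) ^ (-(η:ℝ))}

/-- The directional maximal operator `M^ν_η`. -/
def Mnu (n η : ℕ) (e : EuclideanSpace ℝ (Fin n)) (f : Pt n → ℝ) (z : Pt n) : ℝ≥0∞ :=
  ⨆ (ℓ : ℕ) (_ : ℓ ≤ η) (j : ℤ),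
    (ENNReal.ofReal ((2:ℝ) ^ j * (2:ℝ) ^ (j - (ℓ:ℤ)) * (2:ℝ) ^ ((j - (η:ℤ)) * ((n:ℤ) - 1))))⁻¹ *
      ∫⁻ p in {p : Pt n | p ∈ shell n ℓ j ∧ p.1 ∈ coneDir n η e},
        ENNReal.ofReal (f (z.1 - p.1, z.2 - p.2))

/-- The averaged maximal operator `M_η`. -/
def Meta (n η : ℕ) {ι : Type} [Fintype ι] (y : ι → EuclideanSpace ℝ (Fin n)) (f : Pt n → ℝ)
    (z : Pt n) : ℝ≥0∞ :=
  (ENNReal.ofReal ((2:ℝ) ^ ((η:ℤ) * ((n:ℤ) - 1))))⁻¹ * ∑ ν, Mnu n η (y ν) f z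

/-- `Ω^α(x,t) = (|t|+|x|)^{α−n} (|t|−|x|)^{α/n−1}`. -/
def Om (n : ℕ) (α : ℝ) (p : Pt n) : ℝ≥0∞ :=
  ENNReal.ofReal ((|p.2| + ‖p.1‖) ^ (α - n) * (|p.2| - ‖p.1‖) ^ (α / n - 1))

/-!
On `Λ_{ℓj}` the kernel is at most `2^{(α/n - 1)J}` with `J = j(n+1) - ℓ`, and `|Λ_{ℓj}| ≲ 2^J`.
The integral of `f(z - ·)` over `Λ_{ℓj}` is bounded in two ways: by `2^J M_η f`, covering the
shell by the cones `Γ^ν_η`, and by Hölder's inequality by `2^{J(1 - 1/p)} θ_ℓ^{1/p} ‖f‖_p`. The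
definition of `ρ_ℓ` turns `θ_ℓ^{1/p} ‖f‖_p` into `2^{(ρ_ℓ(n+1) - ℓ)/p} M_η f`, and also writes the
right-hand side as `2^{-|j - ρ_ℓ|(n+1) min(α/n, 1/q) + (α/n)(ρ_ℓ(n+1) - ℓ)} M_η f`. Since
`α/n = 1/p - 1/q`, the first bound suffices for `j ≤ ρ_ℓ` and the second for `j ≥ ρ_ℓ`.
-/

open Metric Set

lemma ofReal_two_rpow (x : ℝ) : ENNReal.ofReal ((2 : ℝ) ^ x) = (2 : ℝ≥0∞) ^ x := by
  rw [← ENNReal.ofReal_rpow_of_pos two_pos, ENNReal.ofReal_ofNat]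

lemma ofReal_two_zpow (k : ℤ) : ENNReal.ofReal ((2 : ℝ) ^ k) = (2 : ℝ≥0∞) ^ (k : ℝ) := by
  rw [← Real.rpow_intCast, ofReal_two_rpow]

lemma lintegral_le_lintegral_rpow_mul_measure_univ {X : Type*} [MeasurableSpace X]
    (μ : Measure X) {p : ℝ} (hp : 1 < p) {g : X → ℝ≥0∞} (hg : AEMeasurable g μ) :
    ∫⁻ x, g x ∂μ ≤ (∫⁻ x, g x ^ p ∂μ) ^ (1 / p) * μ univ ^ (1 - 1 / p) := by
  have hpq := Real.HolderConjugate.conjExponent hp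
  have h := ENNReal.lintegral_mul_le_Lp_mul_Lq μ hpq hg aemeasurable_const (g := fun _ => 1)
  rw [one_div (p.conjExponent), ← hpq.one_sub_inv, ← one_div] at h
  simpa using h

lemma rpow_interpolation_eq {θ N M G : ℝ≥0∞} {p q : ℝ} (hp : 0 < p) (hpq : p ≤ q)
    (hM0 : M ≠ 0) (hMtop : M ≠ ⊤) (h : θ ^ (1 / p) * N = G * M) :
    θ ^ (1 / p - 1 / q) * M ^ (p / q) * N ^ (1 - p / q) = G ^ (1 - p / q) * M := by
  have hq : 0 < q := hp.trans_le hpq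
  have hr : 0 ≤ 1 - p / q := by rw [sub_nonneg, div_le_one hq]; exact hpq
  have hθ : θ ^ (1 / p - 1 / q) = (θ ^ (1 / p)) ^ (1 - p / q) := by
    rw [← ENNReal.rpow_mul]; congr 1; field_simp
  calc θ ^ (1 / p - 1 / q) * M ^ (p / q) * N ^ (1 - p / q)
      = (θ ^ (1 / p) * N) ^ (1 - p / q) * M ^ (p / q) := by
        rw [hθ, ENNReal.mul_rpow_of_nonneg _ _ hr]; ring
    _ = G ^ (1 - p / q) * (M ^ (1 - p / q) * M ^ (p / q)) := by
        rw [h, ENNReal.mul_rpow_of_nonneg _ _ hr, mul_assoc]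
    _ = G ^ (1 - p / q) * M := by
        rw [← ENNReal.rpow_add _ _ hM0 hMtop, sub_add_cancel, ENNReal.rpow_one]

lemma le_of_dyadic_bounds {X K M : ℝ≥0∞} {a p q J R : ℝ} (ha : a = 1 / p - 1 / q)
    (hA : X ≤ 2 ^ (a * J) * M) (hB : X ≤ K * 2 ^ ((a - 1 / p) * J + R / p) * M) :
    X ≤ (1 + K) * (2 ^ (-|R - J| * min a (1 / q) + a * R) * M) := by
  rcases le_total J R with hJR | hRJ
  · have hexp : a * J ≤ -|R - J| * min a (1 / q) + a * R := by
      have := mul_nonneg (sub_nonneg.2 hJR) (sub_nonneg.2 (min_le_left a (1 / q)))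
      rw [abs_of_nonneg (sub_nonneg.2 hJR)]
      linarith
    calc X ≤ 2 ^ (a * J) * M := hA
      _ ≤ 2 ^ (-|R - J| * min a (1 / q) + a * R) * M := by gcongr; exact one_le_two
      _ ≤ _ := le_mul_of_one_le_left' le_self_add
  · have hexp : (a - 1 / p) * J + R / p ≤ -|R - J| * min a (1 / q) + a * R := by
      have := mul_nonneg (sub_nonneg.2 hRJ) (sub_nonneg.2 (min_le_right a (1 / q)))
      rw [abs_of_nonpos (sub_nonpos.2 hRJ)]
      linear_combination this + (J - R) * ha
    calc X ≤ K * 2 ^ ((a - 1 / p) * J + R / p) * M := hB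
      _ ≤ (1 + K) * 2 ^ (-|R - J| * min a (1 / q) + a * R) * M := by
        gcongr ?_ * 2 ^ ?_ * M
        · exact le_add_self
        · exact one_le_two
      _ = _ := mul_assoc _ _ _

section Shell

variable {n : ℕ} {ℓ j : ℤ}

lemma mem_shell_iff {w : Pt n} :
    w ∈ shell n ℓ j ↔ (2 : ℝ) ^ j ≤ |w.2| + ‖w.1‖ ∧ |w.2| + ‖w.1‖ < (2 : ℝ) ^ (j + 1) ∧
      (2 : ℝ) ^ (j - ℓ) ≤ |w.2| - ‖w.1‖ ∧ |w.2| - ‖w.1‖ < (2 : ℝ) ^ (j - ℓ + 1) := by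
  simp [shell, shellAt]

lemma measurableSet_shell : MeasurableSet (shell n ℓ j) := by
  have hsum : Measurable fun w : Pt n => |w.2| + ‖w.1‖ := by fun_prop
  have hdiff : Measurable fun w : Pt n => |w.2| - ‖w.1‖ := by fun_prop
  have : shell n ℓ j = (fun w : Pt n => |w.2| + ‖w.1‖) ⁻¹' Ico (2 ^ j) (2 ^ (j + 1)) ∩
      (fun w : Pt n => |w.2| - ‖w.1‖) ⁻¹' Ico (2 ^ (j - ℓ)) (2 ^ (j - ℓ + 1)) := by
    ext w
    simp only [mem_shell_iff, mem_inter_iff, mem_preimage, mem_Ico]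
    tauto
  rw [this]
  exact (hsum measurableSet_Ico).inter (hdiff measurableSet_Ico)

lemma norm_fst_lt_of_mem_shell {w : Pt n} (hw : w ∈ shell n ℓ j) : ‖w.1‖ < 2 ^ j := by
  obtain ⟨-, hsum, hdiff, -⟩ := mem_shell_iff.1 hw
  have : (0 : ℝ) < 2 ^ (j - ℓ) := by positivity
  rw [zpow_add_one₀ two_ne_zero] at hsum
  linarith

lemma volume_slice_shell_le (v : EuclideanSpace ℝ (Fin n)) :
    volume (Prod.mk v ⁻¹' shell n ℓ j) ≤ 2 ^ ((j - ℓ : ℤ) : ℝ) * 2 := by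
  set a : ℝ := 2 ^ (j - ℓ) + ‖v‖
  have hsub : Prod.mk v ⁻¹' shell n ℓ j ⊆
      Icc (-(a + 2 ^ (j - ℓ))) (-a) ∪ Icc a (a + 2 ^ (j - ℓ)) := by
    intro s hs
    obtain ⟨-, -, hlow, hup⟩ := mem_shell_iff.1 hs
    rw [zpow_add_one₀ two_ne_zero] at hup
    rcases abs_cases s with ⟨hs, -⟩ | ⟨hs, -⟩
    · right; constructor <;> simp only at hlow hup <;> linarith
    · left; constructor <;> simp only at hlow hup <;> linarith
  calc volume (Prod.mk v ⁻¹' shell n ℓ j)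
      ≤ volume (Icc (-(a + 2 ^ (j - ℓ))) (-a)) + volume (Icc a (a + 2 ^ (j - ℓ))) :=
        (measure_mono hsub).trans (measure_union_le _ _)
    _ = 2 ^ ((j - ℓ : ℤ) : ℝ) * 2 := by
        rw [Real.volume_Icc, Real.volume_Icc, ← ofReal_two_zpow]
        ring_nf

lemma volume_shell_le :
    volume (shell n ℓ j) ≤
      2 * volume (ball (0 : EuclideanSpace ℝ (Fin n)) 1) * 2 ^ ((j : ℝ) * (n + 1) - ℓ) := by
  rw [Measure.volume_eq_prod, Measure.prod_apply measurableSet_shell]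
  have hslice : ∀ v, volume (Prod.mk v ⁻¹' shell n ℓ j) ≤
      (ball (0 : EuclideanSpace ℝ (Fin n)) (2 ^ j)).indicator
        (fun _ => 2 ^ ((j - ℓ : ℤ) : ℝ) * 2) v := by
    intro v
    by_cases hv : v ∈ ball (0 : EuclideanSpace ℝ (Fin n)) (2 ^ j)
    · rw [indicator_of_mem hv]
      exact volume_slice_shell_le v
    · rw [indicator_of_notMem hv]
      refine (measure_mono_null (t := ∅) (fun s hs => hv ?_) measure_empty).le
      simpa using norm_fst_lt_of_mem_shell hs
  calc ∫⁻ v, volume (Prod.mk v ⁻¹' shell n ℓ j)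
      ≤ ∫⁻ v, (ball (0 : EuclideanSpace ℝ (Fin n)) (2 ^ j)).indicator
          (fun _ => 2 ^ ((j - ℓ : ℤ) : ℝ) * 2) v := lintegral_mono hslice
    _ = 2 ^ ((j - ℓ : ℤ) : ℝ) * 2 *
          (volume (ball (0 : EuclideanSpace ℝ (Fin n)) 1) * 2 ^ ((j : ℝ) * n)) := by
        rw [lintegral_indicator_const measurableSet_ball,
          Measure.addHaar_ball_of_pos _ _ (by positivity), finrank_euclideanSpace_fin,
          ← zpow_natCast, ← zpow_mul, ofReal_two_zpow, mul_comm _ (volume _)]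
        push_cast; rfl
    _ = _ := by
        rw [show (j : ℝ) * (n + 1) - ℓ = ((j - ℓ : ℤ) : ℝ) + j * n by push_cast; ring,
          ENNReal.rpow_add _ _ two_ne_zero ofNat_ne_top]
        ring

lemma ker_le_of_mem_shell (hn : n ≠ 0) {α : ℝ} (hαn : α ≤ n) (f : Pt n → ℝ) (z : Pt n)
    {w : Pt n} (hw : w ∈ shell n ℓ j) :
    ker n α f z w ≤
      ENNReal.ofReal (f (z.1 - w.1, z.2 - w.2)) * 2 ^ ((α / n - 1) * (j * (n + 1) - ℓ)) := by
  obtain ⟨hsum, -, hdiff, -⟩ := mem_shell_iff.1 hw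
  have hexp : α / n - 1 ≤ 0 := by
    rw [sub_nonpos, div_le_one (by positivity)]; exact hαn
  have hweight : (|w.2| + ‖w.1‖) ^ (α - n) * (|w.2| - ‖w.1‖) ^ (α / n - 1) ≤
      (2 : ℝ) ^ ((α / n - 1) * (j * (n + 1) - ℓ)) := by
    rw [← Real.rpow_intCast] at hsum hdiff
    calc (|w.2| + ‖w.1‖) ^ (α - n) * (|w.2| - ‖w.1‖) ^ (α / n - 1)
        ≤ ((2 : ℝ) ^ (j : ℝ)) ^ (α - n) * ((2 : ℝ) ^ ((j - ℓ : ℤ) : ℝ)) ^ (α / n - 1) := by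
          have hpos : (0 : ℝ) < 2 ^ (j : ℝ) := by positivity
          exact mul_le_mul (Real.rpow_le_rpow_of_nonpos hpos hsum (by linarith))
            (Real.rpow_le_rpow_of_nonpos (by positivity) hdiff hexp)
            (Real.rpow_nonneg ((by positivity : (0 : ℝ) ≤ _).trans hdiff) _) (by positivity)
      _ = (2 : ℝ) ^ ((α / n - 1) * (j * (n + 1) - ℓ)) := by
          rw [← Real.rpow_mul zero_le_two, ← Real.rpow_mul zero_le_two, ← Real.rpow_add two_pos]
          congr 1
          push_cast
          field_simp
          ring
  rw [ker, ← ofReal_two_rpow]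
  gcongr

lemma Dlj_le_rpow_mul_setLIntegral (hn : n ≠ 0) {α : ℝ} (hαn : α ≤ n) (f : Pt n → ℝ)
    (z : Pt n) :
    Dlj n α ℓ j f z ≤ 2 ^ ((α / n - 1) * (j * (n + 1) - ℓ)) *
      ∫⁻ w in shell n ℓ j, ENNReal.ofReal (f (z.1 - w.1, z.2 - w.2)) := by
  rw [Dlj, ← lintegral_const_mul' _ _ (by simp)]
  refine setLIntegral_mono' measurableSet_shell fun w hw => ?_
  rw [mul_comm]
  exact ker_le_of_mem_shell hn hαn f z hw

lemma setLIntegral_shell_rpow_le_theta {p : ℝ} (hp : 0 < p) {f : Pt n → ℝ}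
    (hN0 : eLpNorm f (ENNReal.ofReal p) volume ≠ 0)
    (hNtop : eLpNorm f (ENNReal.ofReal p) volume ≠ ⊤) (z : Pt n) :
    (∫⁻ w in shell n ℓ j, ENNReal.ofReal (f (z.1 - w.1, z.2 - w.2)) ^ p) ^ (1 / p)
      ≤ theta n p f ℓ z ^ (1 / p) * eLpNorm f (ENNReal.ofReal p) volume := by
  have hLam : ∫⁻ w in Lam n ℓ, ENNReal.ofReal (f (z.1 - w.1, z.2 - w.2)) ^ p
      = theta n p f ℓ z * eLpNorm f (ENNReal.ofReal p) volume ^ p := by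
    rw [theta, ENNReal.div_mul_cancel (ENNReal.rpow_pos (pos_iff_ne_zero.2 hN0) hNtop).ne'
      (ENNReal.rpow_ne_top_of_nonneg hp.le hNtop)]
  calc (∫⁻ w in shell n ℓ j, ENNReal.ofReal (f (z.1 - w.1, z.2 - w.2)) ^ p) ^ (1 / p)
      ≤ (theta n p f ℓ z * eLpNorm f (ENNReal.ofReal p) volume ^ p) ^ (1 / p) := by
        rw [← hLam]
        gcongr
        exact subset_iUnion (shell n ℓ) j
    _ = _ := by
        rw [ENNReal.mul_rpow_of_nonneg _ _ (by positivity), ← ENNReal.rpow_mul,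
          mul_one_div_cancel hp.ne', ENNReal.rpow_one]

lemma Dlj_le_rpow_mul_theta_rpow_mul_eLpNorm (hn : n ≠ 0) {α : ℝ} (hαn : α ≤ n) {p : ℝ}
    (hp : 1 < p) {f : Pt n → ℝ} (hf : Measurable f)
    (hN0 : eLpNorm f (ENNReal.ofReal p) volume ≠ 0)
    (hNtop : eLpNorm f (ENNReal.ofReal p) volume ≠ ⊤) (z : Pt n) :
    Dlj n α ℓ j f z ≤ (2 * volume (ball (0 : EuclideanSpace ℝ (Fin n)) 1)) ^ (1 - 1 / p) *
      2 ^ ((α / n - 1 / p) * (j * (n + 1) - ℓ)) *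
        (theta n p f ℓ z ^ (1 / p) * eLpNorm f (ENNReal.ofReal p) volume) := by
  have hr : 0 ≤ 1 - 1 / p := by
    rw [sub_nonneg, div_le_one (by linarith)]; exact hp.le
  have hg : Measurable fun w : Pt n => ENNReal.ofReal (f (z.1 - w.1, z.2 - w.2)) := by
    fun_prop
  have hHolder := lintegral_le_lintegral_rpow_mul_measure_univ
    (volume.restrict (shell n ℓ j)) hp hg.aemeasurable
  rw [Measure.restrict_apply_univ] at hHolder
  calc Dlj n α ℓ j f z
      ≤ 2 ^ ((α / n - 1) * (j * (n + 1) - ℓ)) *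
          ∫⁻ w in shell n ℓ j, ENNReal.ofReal (f (z.1 - w.1, z.2 - w.2)) :=
        Dlj_le_rpow_mul_setLIntegral hn hαn f z
    _ ≤ 2 ^ ((α / n - 1) * (j * (n + 1) - ℓ)) *
          ((theta n p f ℓ z ^ (1 / p) * eLpNorm f (ENNReal.ofReal p) volume) *
            (2 * volume (ball (0 : EuclideanSpace ℝ (Fin n)) 1) *
              2 ^ ((j : ℝ) * (n + 1) - ℓ)) ^ (1 - 1 / p)) := by
        gcongr
        refine hHolder.trans ?_
        gcongr
        · exact setLIntegral_shell_rpow_le_theta (by linarith) hN0 hNtop z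
        · exact volume_shell_le
    _ = _ := by
        rw [ENNReal.mul_rpow_of_nonneg _ _ hr, ← ENNReal.rpow_mul,
          show (α / n - 1 / p) * (j * (n + 1) - ℓ)
            = (α / n - 1) * (j * (n + 1) - ℓ) + (j * (n + 1) - ℓ) * (1 - 1 / p) by ring,
          ENNReal.rpow_add _ _ two_ne_zero ofNat_ne_top]
        ring

end Shell

section Maximal

variable {n η : ℕ} {ι : Type} [Fintype ι] {y : ι → EuclideanSpace ℝ (Fin n)}

lemma setLIntegral_le_sum_cones (hn : n ≠ 0)
    (hcov : ∀ w : EuclideanSpace ℝ (Fin n), w ≠ 0 → ∃ ν, w ∈ coneDir n η (y ν))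
    (s : Set (Pt n)) (g : Pt n → ℝ≥0∞) :
    ∫⁻ w in s, g w ≤ ∑ ν, ∫⁻ w in {w | w ∈ s ∧ w.1 ∈ coneDir n η (y ν)}, g w := by
  have : NeZero n := ⟨hn⟩
  have hnull : volume ({0} ×ˢ univ : Set (Pt n)) = 0 := by
    rw [Measure.volume_eq_prod, Measure.prod_prod, measure_singleton, zero_mul]
  have hcover : s ≤ᵐ[volume] ⋃ ν, {w | w ∈ s ∧ w.1 ∈ coneDir n η (y ν)} := by
    refine ae_le_set.2 (measure_mono_null (fun w hw => ?_) hnull)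
    obtain ⟨hws, hwν⟩ := hw
    by_contra h0
    obtain ⟨ν, hν⟩ := hcov w.1 fun h => h0 ⟨h, mem_univ _⟩
    exact hwν (mem_iUnion.2 ⟨ν, hws, hν⟩)
  calc ∫⁻ w in s, g w ≤ ∫⁻ w in ⋃ ν, {w | w ∈ s ∧ w.1 ∈ coneDir n η (y ν)}, g w :=
        lintegral_mono_set' hcover
    _ ≤ ∑' ν, ∫⁻ w in {w | w ∈ s ∧ w.1 ∈ coneDir n η (y ν)}, g w := lintegral_iUnion_le _ _
    _ = _ := tsum_fintype _

lemma setLIntegral_cone_shell_le_Mnu (e : EuclideanSpace ℝ (Fin n)) (f : Pt n → ℝ) (z : Pt n)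
    {ℓ : ℕ} (hℓ : ℓ ≤ η) (j : ℤ) :
    ∫⁻ w in {w | w ∈ shell n ℓ j ∧ w.1 ∈ coneDir n η e},
        ENNReal.ofReal (f (z.1 - w.1, z.2 - w.2))
      ≤ 2 ^ ((j : ℝ) * (n + 1) - ℓ - η * (n - 1)) * Mnu n η e f z := by
  have hscale : ENNReal.ofReal ((2 : ℝ) ^ j * (2 : ℝ) ^ (j - (ℓ : ℤ)) *
      (2 : ℝ) ^ ((j - (η : ℤ)) * ((n : ℤ) - 1))) = 2 ^ ((j : ℝ) * (n + 1) - ℓ - η * (n - 1)) := by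
    rw [ENNReal.ofReal_mul (by positivity), ENNReal.ofReal_mul (by positivity), ofReal_two_zpow,
      ofReal_two_zpow, ofReal_two_zpow, ← ENNReal.rpow_add _ _ two_ne_zero ofNat_ne_top,
      ← ENNReal.rpow_add _ _ two_ne_zero ofNat_ne_top]
    congr 1
    push_cast
    ring
  rw [← hscale, ← ENNReal.inv_mul_le_iff (by simp; positivity) (by simp)]
  exact le_iSup_of_le ℓ (le_iSup_of_le hℓ (le_iSup_of_le j le_rfl))

lemma setLIntegral_shell_le_Meta (hn : n ≠ 0)
    (hcov : ∀ w : EuclideanSpace ℝ (Fin n), w ≠ 0 → ∃ ν, w ∈ coneDir n η (y ν))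
    (f : Pt n → ℝ) (z : Pt n) {ℓ : ℕ} (hℓ : ℓ ≤ η) (j : ℤ) :
    ∫⁻ w in shell n ℓ j, ENNReal.ofReal (f (z.1 - w.1, z.2 - w.2))
      ≤ 2 ^ ((j : ℝ) * (n + 1) - ℓ) * Meta n η y f z := by
  have hη : ENNReal.ofReal ((2 : ℝ) ^ ((η : ℤ) * ((n : ℤ) - 1))) = 2 ^ ((η : ℝ) * (n - 1)) := by
    rw [ofReal_two_zpow]; push_cast; rfl
  calc ∫⁻ w in shell n ℓ j, ENNReal.ofReal (f (z.1 - w.1, z.2 - w.2))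
      ≤ ∑ ν, 2 ^ ((j : ℝ) * (n + 1) - ℓ - η * (n - 1)) * Mnu n η (y ν) f z :=
        (setLIntegral_le_sum_cones hn hcov _ _).trans
          (Finset.sum_le_sum fun ν _ => setLIntegral_cone_shell_le_Mnu _ f z hℓ j)
    _ = 2 ^ ((j : ℝ) * (n + 1) - ℓ) * Meta n η y f z := by
        rw [← Finset.mul_sum, Meta, hη, ← mul_assoc, ← ENNReal.rpow_neg,
          ← ENNReal.rpow_add _ _ two_ne_zero ofNat_ne_top]
        ring_nf

lemma Dlj_le_rpow_mul_Meta (hn : n ≠ 0) {α : ℝ} (hαn : α ≤ n)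
    (hcov : ∀ w : EuclideanSpace ℝ (Fin n), w ≠ 0 → ∃ ν, w ∈ coneDir n η (y ν))
    (f : Pt n → ℝ) (z : Pt n) {ℓ : ℕ} (hℓ : ℓ ≤ η) (j : ℤ) :
    Dlj n α ℓ j f z ≤ 2 ^ (α / n * (j * (n + 1) - ℓ)) * Meta n η y f z := by
  calc Dlj n α ℓ j f z
      ≤ 2 ^ ((α / n - 1) * (j * (n + 1) - ℓ)) *
          (2 ^ ((j : ℝ) * (n + 1) - ℓ) * Meta n η y f z) := by
        refine (Dlj_le_rpow_mul_setLIntegral hn hαn f z).trans ?_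
        push_cast
        gcongr
        exact setLIntegral_shell_le_Meta hn hcov f z hℓ j
    _ = _ := by
        rw [← mul_assoc, ← ENNReal.rpow_add _ _ two_ne_zero ofNat_ne_top]
        ring_nf

end Maximal

theorem stmt11_general (n : ℕ) (hn : 2 ≤ n) (α : ℝ) (hαn : α < n)
    (p q : ℝ) (hp : 1 < p) (hpq : p < q) (hform : α / n = 1 / p - 1 / q)
    (C₀ : ℝ) :
    ∃ C : ℝ≥0, 0 < C ∧ ∀ (η : ℕ), 1 ≤ η →
      ∀ (ι : Type) [Fintype ι] (y : ι → EuclideanSpace ℝ (Fin n)),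
      (∀ ν, ‖y ν‖ = 1) →
      (∀ w : EuclideanSpace ℝ (Fin n), w ≠ 0 → ∃ ν, w ∈ coneDir n η (y ν)) →
      ((Fintype.card ι : ℝ) ≤ C₀ * (2:ℝ) ^ ((η:ℤ) * ((n:ℤ) - 1))) →
      ∀ f : Pt n → ℝ, Measurable f → (∀ z, 0 ≤ f z) →
        MemLp f (ENNReal.ofReal p) volume → eLpNorm f (ENNReal.ofReal p) volume ≠ 0 →
      ∀ (ℓ : ℕ), ℓ ≤ η → ∀ (j : ℤ) (z : Pt n),
        0 < Meta n η y f z → Meta n η y f z < ⊤ → 0 < theta n p f (ℓ:ℤ) z →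
        ∀ ρ : ℝ,
          ENNReal.ofReal ((2:ℝ) ^ ((ρ * ((n:ℝ) + 1) - ℓ) / p)) =
            theta n p f (ℓ:ℤ) z ^ (1 / p) * eLpNorm f (ENNReal.ofReal p) volume /
              Meta n η y f z →
          Dlj n α (ℓ:ℤ) j f z ≤
            C * ENNReal.ofReal
                ((2:ℝ) ^ (-(|(j:ℝ) - ρ|) * ((n:ℝ) + 1) * min (α / n) (1 / q))) *
              theta n p f (ℓ:ℤ) z ^ (1 / p - 1 / q) * Meta n η y f z ^ (p / q) *
                eLpNorm f (ENNReal.ofReal p) volume ^ (1 - p / q) := by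
  set K := (2 * volume (ball (0 : EuclideanSpace ℝ (Fin n)) 1)) ^ (1 - 1 / p)
  have hK : K ≠ ⊤ := ENNReal.rpow_ne_top_of_nonneg
    (by rw [sub_nonneg, div_le_one (by linarith)]; exact hp.le)
    (ENNReal.mul_ne_top ofNat_ne_top measure_ball_lt_top.ne)
  have hC : (((1 + K).toNNReal : ℝ≥0) : ℝ≥0∞) = 1 + K := ENNReal.coe_toNNReal (by simpa using hK)
  refine ⟨(1 + K).toNNReal, by simp [← ENNReal.coe_lt_coe, hC], ?_⟩
  intro η _ ι _ y _ hcov _ f hf _ hmem hN0 ℓ hℓη j z hM0 hMtop _ ρ hρ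
  set θ := theta n p f ℓ z
  set N := eLpNorm f (ENNReal.ofReal p) volume
  set M := Meta n η y f z
  set J : ℝ := j * (n + 1) - ℓ
  set R : ℝ := ρ * (n + 1) - ℓ
  have hG : θ ^ (1 / p) * N = 2 ^ (R / p) * M := by
    rw [← ofReal_two_rpow, hρ, ENNReal.div_mul_cancel hM0.ne' hMtop.ne]
  have hA : Dlj n α ℓ j f z ≤ 2 ^ (α / n * J) * M :=
    Dlj_le_rpow_mul_Meta (by omega) hαn.le hcov f z hℓη j
  have hB : Dlj n α ℓ j f z ≤ K * 2 ^ ((α / n - 1 / p) * J + R / p) * M := by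
    rw [ENNReal.rpow_add _ _ two_ne_zero ofNat_ne_top, mul_assoc K, mul_assoc, ← hG, ← mul_assoc]
    simpa only [Int.cast_natCast] using
      Dlj_le_rpow_mul_theta_rpow_mul_eLpNorm (ℓ := ℓ) (j := j) (by omega) hαn.le hp hf hN0
        hmem.2.ne z
  have hT : -|(j : ℝ) - ρ| * (n + 1) * min (α / n) (1 / q) + R / p * (1 - p / q)
      = -|R - J| * min (α / n) (1 / q) + α / n * R := by
    rw [show R - J = (ρ - j) * (n + 1) by ring, abs_mul, abs_sub_comm,
      abs_of_pos (by positivity : (0 : ℝ) < n + 1), hform]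
    field_simp
  rw [ofReal_two_rpow, hC, mul_assoc _ (θ ^ _), mul_assoc, mul_assoc,
    rpow_interpolation_eq (by linarith) hpq.le hM0.ne' hMtop.ne hG, ← ENNReal.rpow_mul,
    ← mul_assoc (2 ^ _), ← ENNReal.rpow_add _ _ two_ne_zero ofNat_ne_top, hT]
  exact le_of_dyadic_bounds hform hA hB

theorem stmt11 (n : ℕ) (hn : 2 ≤ n) (α : ℝ) (hα0 : 0 < α) (hαn : α < n)
    (p q : ℝ) (hp : 1 < p) (hpq : p < q) (hform : α / n = 1 / p - 1 / q)
    (C₀ : ℝ) (hC₀ : 1 ≤ C₀) :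
    ∃ C : ℝ≥0, 0 < C ∧ ∀ (η : ℕ), 1 ≤ η →
      ∀ (ι : Type) [Fintype ι] (y : ι → EuclideanSpace ℝ (Fin n)),
      (∀ ν, ‖y ν‖ = 1) →
      (∀ w : EuclideanSpace ℝ (Fin n), w ≠ 0 → ∃ ν, w ∈ coneDir n η (y ν)) →
      ((Fintype.card ι : ℝ) ≤ C₀ * (2:ℝ) ^ ((η:ℤ) * ((n:ℤ) - 1))) →
      ∀ f : Pt n → ℝ, Measurable f → (∀ z, 0 ≤ f z) →
        MemLp f (ENNReal.ofReal p) volume → eLpNorm f (ENNReal.ofReal p) volume ≠ 0 →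
      ∀ (ℓ : ℕ), ℓ ≤ η → ∀ (j : ℤ) (z : Pt n),
        0 < Meta n η y f z → Meta n η y f z < ⊤ → 0 < theta n p f (ℓ:ℤ) z →
        ∀ ρ : ℝ,
          ENNReal.ofReal ((2:ℝ) ^ ((ρ * ((n:ℝ) + 1) - ℓ) / p)) =
            theta n p f (ℓ:ℤ) z ^ (1 / p) * eLpNorm f (ENNReal.ofReal p) volume /
              Meta n η y f z →
          Dlj n α (ℓ:ℤ) j f z ≤
            C * ENNReal.ofReal
                ((2:ℝ) ^ (-(|(j:ℝ) - ρ|) * ((n:ℝ) + 1) * min (α / n) (1 / q))) *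
              theta n p f (ℓ:ℤ) z ^ (1 / p - 1 / q) * Meta n η y f z ^ (p / q) *
                eLpNorm f (ENNReal.ofReal p) volume ^ (1 - p / q) :=
  stmt11_general n hn α hαn p q hp hpq hform C₀

end
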